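/- arXiv:2207.06133 — 3 statements merged into one kernel-verified Lean document; each statement's English description precedes it below -/
import Mathlib

section
/- Let H and K be complex Hilbert spaces, S : H → K a bounded linear operator with Hilbert adjoint S* : K → H, and let δ > 0, ε > 0, E ≥ 0 and α > 0. Suppose φ*, φ_δ ∈ H and u_δ, h ∈ K satisfy: (i) φ_δ minimizes the Tikhonov functional J_α(φ) = ‖Sφ − u_δ‖² + α‖φ‖² over H; (ii) ‖S φ_δ − u_δ‖ = δ + ε (discrepancy principle); (iii) ‖S φ* − u_δ‖ ≤ δ + ε; (iv) ‖φ* − S* h‖ ≤ ε; (v) ‖h‖ ≤ E. Then ‖φ_δ − φ*‖ ≤ 2ε + 2√((δ + ε)·E). (Abstract Hilbert-space form of Theorem 3.2(b).) -/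
/-!
Minimality of `φδ` against `φs`, whose residual is no larger, gives `‖φδ‖ ≤ ‖φs‖`, hence
`‖φδ - φs‖² ≤ 2 Re ⟪φs - φδ, φs⟫`. The source condition splits `φs` as `S* h` plus an
`ε`-small error, so this inner product is at most `ε ‖φs - φδ‖ + ‖S (φs - φδ)‖ ‖h‖`, and both
residuals being at most `δ + ε` bounds `‖S (φs - φδ)‖` by `2 (δ + ε)`. The resulting quadratic
inequality `t² ≤ 2 ε t + 4 (δ + ε) E` for `t = ‖φδ - φs‖` is solved for `t`.
-/

noncomputable def tikhonov {𝕜 E F : Type*} [RCLike 𝕜] [NormedAddCommGroup E] [NormedSpace 𝕜 E]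
    [NormedAddCommGroup F] [NormedSpace 𝕜 F] (S : E →L[𝕜] F) (u : F) (α : ℝ) (φ : E) : ℝ :=
  ‖S φ - u‖ ^ 2 + α * ‖φ‖ ^ 2

theorem le_two_mul_add_two_mul_sqrt_of_sq_le {t a b : ℝ} (ha : 0 ≤ a)
    (h : t ^ 2 ≤ 2 * a * t + 4 * b) : t ≤ 2 * a + 2 * Real.sqrt b := by
  have hs : 0 ≤ Real.sqrt b := Real.sqrt_nonneg b
  have hb : b ≤ Real.sqrt b ^ 2 := Real.sq_sqrt' (x := b) ▸ le_max_left b 0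
  nlinarith

theorem norm_le_of_tikhonov_le {𝕜 E F : Type*} [RCLike 𝕜] [NormedAddCommGroup E]
    [NormedSpace 𝕜 E] [NormedAddCommGroup F] [NormedSpace 𝕜 F] {S : E →L[𝕜] F} {u : F} {α : ℝ}
    (hα : 0 < α) {φ ψ : E} (hJ : tikhonov S u α φ ≤ tikhonov S u α ψ)
    (hres : ‖S ψ - u‖ ≤ ‖S φ - u‖) : ‖φ‖ ≤ ‖ψ‖ := by
  have hsq : ‖S ψ - u‖ ^ 2 ≤ ‖S φ - u‖ ^ 2 := pow_le_pow_left₀ (norm_nonneg _) hres 2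
  have : ‖φ‖ ^ 2 ≤ ‖ψ‖ ^ 2 := le_of_mul_le_mul_left (by unfold tikhonov at hJ; linarith) hα
  exact (pow_le_pow_iff_left₀ (norm_nonneg _) (norm_nonneg _) two_ne_zero).mp this

section InnerProductSpace

variable {𝕜 E F : Type*} [RCLike 𝕜] [NormedAddCommGroup E] [InnerProductSpace 𝕜 E]
  [NormedAddCommGroup F] [InnerProductSpace 𝕜 F]

open RCLike

theorem norm_sub_sq_le_two_mul_re_inner_of_norm_le {x y : E} (hxy : ‖x‖ ≤ ‖y‖) :
    ‖x - y‖ ^ 2 ≤ 2 * re (inner 𝕜 (y - x) y) := by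
  have hsq : ‖x‖ ^ 2 ≤ ‖y‖ ^ 2 := pow_le_pow_left₀ (norm_nonneg _) hxy 2
  rw [norm_sub_sq (𝕜 := 𝕜), inner_sub_left, map_sub, inner_self_eq_norm_sq]
  linarith

theorem re_inner_le_of_sub_adjoint [CompleteSpace E] [CompleteSpace F] (S : E →L[𝕜] F)
    (x φ : E) (h : F) :
    re (inner 𝕜 x φ) ≤ ‖x‖ * ‖φ - S.adjoint h‖ + ‖S x‖ * ‖h‖ := by
  have hsplit : inner 𝕜 x φ = inner 𝕜 x (φ - S.adjoint h) + inner 𝕜 (S x) h := by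
    rw [← ContinuousLinearMap.adjoint_inner_right, ← inner_add_right, sub_add_cancel]
  rw [hsplit, map_add]
  gcongr <;> exact (re_le_norm _).trans (norm_inner_le_norm _ _)

end InnerProductSpace

theorem norm_map_sub_le_of_residual_le {E F : Type*} [SeminormedAddCommGroup E]
    [SeminormedAddCommGroup F] (S : E →+ F) {u : F} {r : ℝ} {φ ψ : E}
    (hφ : ‖S φ - u‖ ≤ r) (hψ : ‖S ψ - u‖ ≤ r) : ‖S (φ - ψ)‖ ≤ 2 * r := by
  calc ‖S (φ - ψ)‖ = ‖(S φ - u) - (S ψ - u)‖ := by rw [map_sub, sub_sub_sub_cancel_right]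
    _ ≤ ‖S φ - u‖ + ‖S ψ - u‖ := norm_sub_le _ _
    _ ≤ 2 * r := by linarith

theorem stmt_0_general
    {H K : Type*} [NormedAddCommGroup H] [InnerProductSpace ℂ H] [CompleteSpace H]
    [NormedAddCommGroup K] [InnerProductSpace ℂ K] [CompleteSpace K]
    (S : H →L[ℂ] K) (δ ε E α : ℝ) (hα : 0 < α)
    (φs φδ : H) (uδ h : K)
    (hmin : ∀ ψ : H, ‖S φδ - uδ‖ ^ 2 + α * ‖φδ‖ ^ 2 ≤ ‖S ψ - uδ‖ ^ 2 + α * ‖ψ‖ ^ 2)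
    (hdisc : ‖S φδ - uδ‖ = δ + ε)
    (hφs : ‖S φs - uδ‖ ≤ δ + ε)
    (happrox : ‖φs - (ContinuousLinearMap.adjoint S) h‖ ≤ ε)
    (hh : ‖h‖ ≤ E) :
    ‖φδ - φs‖ ≤ 2 * ε + 2 * Real.sqrt ((δ + ε) * E) := by
  have hnorm : ‖φδ‖ ≤ ‖φs‖ := norm_le_of_tikhonov_le hα (hmin φs) (hdisc ▸ hφs)
  have hS : ‖S (φs - φδ)‖ ≤ 2 * (δ + ε) :=
    norm_map_sub_le_of_residual_le (S : H →+ K) hφs hdisc.le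
  have hquad : ‖φδ - φs‖ ^ 2 ≤ 2 * ε * ‖φδ - φs‖ + 4 * ((δ + ε) * E) := by
    have hsrc := re_inner_le_of_sub_adjoint S (φs - φδ) φs h
    have hε : ‖φs - φδ‖ * ‖φs - S.adjoint h‖ ≤ ‖φδ - φs‖ * ε := by
      rw [norm_sub_rev]; gcongr
    have hE : ‖S (φs - φδ)‖ * ‖h‖ ≤ 2 * (δ + ε) * E :=
      mul_le_mul hS hh (norm_nonneg _) ((norm_nonneg _).trans hS)
    linarith [norm_sub_sq_le_two_mul_re_inner_of_norm_le (𝕜 := ℂ) hnorm]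
  exact le_two_mul_add_two_mul_sqrt_of_sq_le ((norm_nonneg _).trans happrox) hquad

/-- Abstract Hilbert-space form of Theorem 3.2(b): error estimate for the Tikhonov
regularized solution under the Morozov discrepancy principle. -/
theorem stmt_0
    {H K : Type*} [NormedAddCommGroup H] [InnerProductSpace ℂ H] [CompleteSpace H]
    [NormedAddCommGroup K] [InnerProductSpace ℂ K] [CompleteSpace K]
    (S : H →L[ℂ] K) (δ ε E α : ℝ) (hδ : 0 < δ) (hε : 0 < ε) (hE : 0 ≤ E) (hα : 0 < α)
    (φs φδ : H) (uδ h : K)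
    (hmin : ∀ ψ : H, ‖S φδ - uδ‖ ^ 2 + α * ‖φδ‖ ^ 2 ≤ ‖S ψ - uδ‖ ^ 2 + α * ‖ψ‖ ^ 2)
    (hdisc : ‖S φδ - uδ‖ = δ + ε)
    (hφs : ‖S φs - uδ‖ ≤ δ + ε)
    (happrox : ‖φs - (ContinuousLinearMap.adjoint S) h‖ ≤ ε)
    (hh : ‖h‖ ≤ E) :
    ‖φδ - φs‖ ≤ 2 * ε + 2 * Real.sqrt ((δ + ε) * E) :=
  stmt_0_general S δ ε E α hα φs φδ uδ h hmin hdisc hφs happrox hh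
end

section
/- Let H and K be complex Hilbert spaces, S : H → K a bounded linear operator, α > 0, δ > 0, ε > 0, and u_δ ∈ K. Suppose φ_δ ∈ H minimizes the Tikhonov functional J_α(φ) = ‖Sφ − u_δ‖² + α‖φ‖² over H and satisfies ‖S φ_δ − u_δ‖ = δ + ε, and suppose φ* ∈ H satisfies ‖S φ* − u_δ‖ ≤ δ + ε. Then ‖φ_δ‖ ≤ ‖φ*‖. (Norm bound for the regularized minimizer under the Morozov discrepancy principle, from the proof of Theorem 3.2(b).) -/
theorem penalty_le_of_fidelity_le {X : Type*} {F R : X → ℝ} {α : ℝ} (hα : 0 < α)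
    {x y : X} (hmin : F x + α * R x ≤ F y + α * R y) (hF : F y ≤ F x) : R x ≤ R y :=
  le_of_mul_le_mul_left (by linarith) hα

theorem stmt_2_general
    {H K : Type*} [NormedAddCommGroup H] [InnerProductSpace ℂ H]
    [NormedAddCommGroup K] [InnerProductSpace ℂ K]
    (S : H →L[ℂ] K) (α δ ε : ℝ) (hα : 0 < α)
    (uδ : K) (φδ φs : H)
    (hmin : ∀ ψ : H, ‖S φδ - uδ‖ ^ 2 + α * ‖φδ‖ ^ 2 ≤ ‖S ψ - uδ‖ ^ 2 + α * ‖ψ‖ ^ 2)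
    (hdisc : ‖S φδ - uδ‖ = δ + ε)
    (hφs : ‖S φs - uδ‖ ≤ δ + ε) :
    ‖φδ‖ ≤ ‖φs‖ := by
  have hres : ‖S φs - uδ‖ ^ 2 ≤ ‖S φδ - uδ‖ ^ 2 := by
    rw [hdisc]
    gcongr
  have hsq : ‖φδ‖ ^ 2 ≤ ‖φs‖ ^ 2 :=
    penalty_le_of_fidelity_le (F := fun ψ ↦ ‖S ψ - uδ‖ ^ 2)
      (R := fun ψ ↦ ‖ψ‖ ^ 2) hα (hmin φs) hres
  exact (pow_le_pow_iff_left₀ (norm_nonneg _) (norm_nonneg _) two_ne_zero).mp hsq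

/-- Norm bound for the regularized minimizer under the Morozov discrepancy principle,
from the proof of Theorem 3.2(b). -/
theorem stmt_2
    {H K : Type*} [NormedAddCommGroup H] [InnerProductSpace ℂ H] [CompleteSpace H]
    [NormedAddCommGroup K] [InnerProductSpace ℂ K] [CompleteSpace K]
    (S : H →L[ℂ] K) (α δ ε : ℝ) (hα : 0 < α) (hδ : 0 < δ) (hε : 0 < ε)
    (uδ : K) (φδ φs : H)
    (hmin : ∀ ψ : H, ‖S φδ - uδ‖ ^ 2 + α * ‖φδ‖ ^ 2 ≤ ‖S ψ - uδ‖ ^ 2 + α * ‖ψ‖ ^ 2)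
    (hdisc : ‖S φδ - uδ‖ = δ + ε)
    (hφs : ‖S φs - uδ‖ ≤ δ + ε) :
    ‖φδ‖ ≤ ‖φs‖ :=
  stmt_2_general S α δ ε hα uδ φδ φs hmin hdisc hφs
end

section
/- Let H and K be complex Hilbert spaces, S : H → K a bounded linear operator with Hilbert adjoint S*, and let δ > 0, ε > 0, E ≥ 0. Suppose φ*, φ_δ ∈ H and u_δ, h ∈ K satisfy: (i) ‖φ* − S* h‖ ≤ ε; (ii) ‖h‖ ≤ E; (iii) ‖S φ* − u_δ‖ ≤ δ + ε; (iv) ‖S φ_δ − u_δ‖ ≤ δ + ε; (v) ‖φ_δ − φ*‖² ≤ 2 Re⟨φ* − φ_δ, φ*⟩. Then ‖φ_δ − φ*‖² ≤ 2ε ‖φ* − φ_δ‖ + 4(δ + ε)·E. (Main inequality chain from the proof of Theorem 3.2(b).) -/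
/-! Moving the source element `S* h` across the inner product splits
`⟪φ* - φ_δ, φ*⟫ = ⟪φ* - φ_δ, φ* - S* h⟫ + ⟪S φ* - S φ_δ, h⟫`; the first term is at most
`ε ‖φ* - φ_δ‖`, and the second at most `2 (δ + ε) E`, since both `S φ*` and `S φ_δ` lie within
`δ + ε` of the data `u_δ`. -/

open scoped InnerProductSpace

section AdjointSplitting

variable {𝕜 E F : Type*} [RCLike 𝕜]
  [NormedAddCommGroup E] [InnerProductSpace 𝕜 E] [CompleteSpace E]
  [NormedAddCommGroup F] [InnerProductSpace 𝕜 F] [CompleteSpace F]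

theorem inner_eq_inner_sub_adjoint_add_inner_apply (A : E →L[𝕜] F) (x y : E) (z : F) :
    ⟪x, y⟫_𝕜 = ⟪x, y - A.adjoint z⟫_𝕜 + ⟪A x, z⟫_𝕜 := by
  rw [← ContinuousLinearMap.adjoint_inner_right, ← inner_add_right, sub_add_cancel]

theorem re_inner_le_norm_mul_norm_sub_adjoint_add (A : E →L[𝕜] F) (x y : E) (z : F) :
    RCLike.re ⟪x, y⟫_𝕜 ≤ ‖x‖ * ‖y - A.adjoint z‖ + ‖A x‖ * ‖z‖ := by
  rw [inner_eq_inner_sub_adjoint_add_inner_apply A x y z, map_add]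
  exact add_le_add (re_inner_le_norm _ _) (re_inner_le_norm _ _)

end AdjointSplitting

theorem stmt_4_general
    {H K : Type*} [NormedAddCommGroup H] [InnerProductSpace ℂ H] [CompleteSpace H]
    [NormedAddCommGroup K] [InnerProductSpace ℂ K] [CompleteSpace K]
    (S : H →L[ℂ] K) (δ ε E : ℝ)
    (φs φδ : H) (uδ h : K)
    (h1 : ‖φs - (ContinuousLinearMap.adjoint S) h‖ ≤ ε)
    (h2 : ‖h‖ ≤ E)
    (h3 : ‖S φs - uδ‖ ≤ δ + ε)
    (h4 : ‖S φδ - uδ‖ ≤ δ + ε)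
    (h5 : ‖φδ - φs‖ ^ 2 ≤ 2 * (inner ℂ (φs - φδ) φs : ℂ).re) :
    ‖φδ - φs‖ ^ 2 ≤ 2 * ε * ‖φs - φδ‖ + 4 * (δ + ε) * E := by
  have hS : ‖S (φs - φδ)‖ ≤ 2 * (δ + ε) := by
    calc ‖S (φs - φδ)‖ ≤ ‖S φs - uδ‖ + ‖uδ - S φδ‖ := by
          rw [map_sub]; exact norm_sub_le_norm_sub_add_norm_sub _ _ _
      _ ≤ 2 * (δ + ε) := by rw [norm_sub_rev uδ]; linarith
  have hsplit := re_inner_le_norm_mul_norm_sub_adjoint_add S (φs - φδ) φs h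
  have hsource : ‖φs - φδ‖ * ‖φs - S.adjoint h‖ ≤ ‖φs - φδ‖ * ε :=
    mul_le_mul_of_nonneg_left h1 (norm_nonneg _)
  have hdata : ‖S (φs - φδ)‖ * ‖h‖ ≤ 2 * (δ + ε) * E :=
    mul_le_mul hS h2 (norm_nonneg _) ((norm_nonneg _).trans hS)
  rw [RCLike.re_to_complex] at hsplit
  linarith

/-- Main inequality chain from the proof of Theorem 3.2(b). -/
theorem stmt_4
    {H K : Type*} [NormedAddCommGroup H] [InnerProductSpace ℂ H] [CompleteSpace H]
    [NormedAddCommGroup K] [InnerProductSpace ℂ K] [CompleteSpace K]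
    (S : H →L[ℂ] K) (δ ε E : ℝ) (hδ : 0 < δ) (hε : 0 < ε) (hE : 0 ≤ E)
    (φs φδ : H) (uδ h : K)
    (h1 : ‖φs - (ContinuousLinearMap.adjoint S) h‖ ≤ ε)
    (h2 : ‖h‖ ≤ E)
    (h3 : ‖S φs - uδ‖ ≤ δ + ε)
    (h4 : ‖S φδ - uδ‖ ≤ δ + ε)
    (h5 : ‖φδ - φs‖ ^ 2 ≤ 2 * (inner ℂ (φs - φδ) φs : ℂ).re) :
    ‖φδ - φs‖ ^ 2 ≤ 2 * ε * ‖φs - φδ‖ + 4 * (δ + ε) * E :=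
  stmt_4_general S δ ε E φs φδ uδ h h1 h2 h3 h4 h5
end
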